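/- Suppose a ≠ 0, b = 0 and 0 ≤ c ≤ 2a²/9. Then for every x lying in the closed interval with endpoints −1/a and 1/(2a) and for every y ∈ ℝ, one has A(x)P(y) − B(x)Q(y) ≥ 0; consequently M(x,y) ≥ 0 for all such (x,y). (Here −1/a is the non-trivial zero of F', F(−1/a) = 1/(6a²) is the boundary energy, 1/(2a) is the other solution of F(x) = 1/(6a²), and 2a²/9 = 2A(1/(2a))/(3B(1/(2a))).) -/

import Mathlib

/-!
For `b = 0` write `s = a x` and `u = c y²`. Then `A = a² (10 + 4s)`, `B = (6 + 4s)(1 + s)²(1 + 2s)`,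
`P = (1 + u)²(2 + u)`, `Q = c (3 + u)`, and `M = x⁴ y⁴ / 24 · (A P − B Q)` for all `a, b, c`.
On `-1 ≤ s ≤ 1/2` the difference `3A − a²B` equals `2a²(1 − 2s)` times a polynomial that is positive
for `s ≥ -1`, and `2Q ≤ 3cP` because `(1 + u)²(2 + u) ≥ 2 + 2u/3`. Where `B > 0` this gives
`B Q ≤ (3/2) c B P ≤ (1/3) a² B P ≤ A P` as soon as `c ≤ 2a²/9`; where `B ≤ 0` there is nothing to prove.
-/

open Set

/-- `F(x) = x²/2 + a·x³/3 + b·x⁴/4`. -/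
noncomputable def Fq (a b : ℝ) : ℝ → ℝ := fun x => x ^ 2 / 2 + a * x ^ 3 / 3 + b * x ^ 4 / 4

/-- `G(y) = y²/2 + c·y⁴/4`. -/
noncomputable def Gq (c : ℝ) : ℝ → ℝ := fun y => y ^ 2 / 2 + c * y ^ 4 / 4

/-- The function `M(x,y)` built from `F` and `G`. -/
noncomputable def Mfun (F G : ℝ → ℝ) (x y : ℝ) : ℝ :=
  (6 * F x * (deriv (deriv F) x) ^ 2 - 3 * (deriv F x) ^ 2 * deriv (deriv F) x
      - 2 * F x * deriv F x * deriv (deriv (deriv F)) x) * G y * (deriv G y) ^ 2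
    + F x * (deriv F x) ^ 2 * deriv (deriv F) x
      * ((deriv G y) ^ 2 - 2 * G y * deriv (deriv G) y)

/-- The function `M(x,y)` for the quartic Hamiltonian with parameters `a`, `b`, `c`. -/
noncomputable def Mq (a b c : ℝ) (x y : ℝ) : ℝ := Mfun (Fq a b) (Gq c) x y

/-- The polynomial `A(x)`. -/
def Apoly (a b x : ℝ) : ℝ :=
  10 * a ^ 2 - 9 * b + a * (30 * b + 4 * a ^ 2) * x + b * (36 * b + 16 * a ^ 2) * x ^ 2
    + 24 * a * b ^ 2 * x ^ 3 + 9 * b ^ 3 * x ^ 4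

/-- The polynomial `B(x)`. -/
def Bpoly (a b x : ℝ) : ℝ :=
  (6 + 4 * a * x + 3 * b * x ^ 2) * (1 + a * x + b * x ^ 2) ^ 2 * (1 + 2 * a * x + 3 * b * x ^ 2)

/-- The polynomial `P(y)`. -/
def Ppoly (c y : ℝ) : ℝ := (1 + c * y ^ 2) ^ 2 * (2 + c * y ^ 2)

/-- The polynomial `Q(y)`. -/
def Qpoly (c y : ℝ) : ℝ := c * (3 + c * y ^ 2)

lemma mul_mem_Icc_of_mem_uIcc_div {K : Type*} [Field K] [LinearOrder K] [IsStrictOrderedRing K]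
    {a p q x : K} (ha : a ≠ 0) (hpq : p ≤ q) (hx : x ∈ uIcc (p / a) (q / a)) :
    a * x ∈ Icc p q := by
  have hax := mem_image_of_mem (a * ·) hx
  rwa [image_const_mul_uIcc, mul_div_cancel₀ _ ha, mul_div_cancel₀ _ ha, uIcc_of_le hpq] at hax

lemma deriv_Fq (a b : ℝ) : deriv (Fq a b) = fun x => x + a * x ^ 2 + b * x ^ 3 :=
  funext fun x => HasDerivAt.deriv <|
    ((((hasDerivAt_pow 2 x).div_const 2).add (((hasDerivAt_pow 3 x).const_mul a).div_const 3)).add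
      (((hasDerivAt_pow 4 x).const_mul b).div_const 4)).congr_deriv (by norm_num; ring)

lemma deriv_deriv_Fq (a b : ℝ) :
    deriv (deriv (Fq a b)) = fun x => 1 + 2 * a * x + 3 * b * x ^ 2 := by
  rw [deriv_Fq]
  exact funext fun x => HasDerivAt.deriv <|
    (((hasDerivAt_id x).add ((hasDerivAt_pow 2 x).const_mul a)).add
      ((hasDerivAt_pow 3 x).const_mul b)).congr_deriv (by norm_num; ring)

lemma deriv_deriv_deriv_Fq (a b : ℝ) :
    deriv (deriv (deriv (Fq a b))) = fun x => 2 * a + 6 * b * x := by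
  rw [deriv_deriv_Fq]
  exact funext fun x => HasDerivAt.deriv <|
    (((hasDerivAt_const x 1).add ((hasDerivAt_id x).const_mul (2 * a))).add
      ((hasDerivAt_pow 2 x).const_mul (3 * b))).congr_deriv (by norm_num; ring)

lemma deriv_Gq (c : ℝ) : deriv (Gq c) = fun y => y + c * y ^ 3 :=
  funext fun y => HasDerivAt.deriv <|
    (((hasDerivAt_pow 2 y).div_const 2).add
      (((hasDerivAt_pow 4 y).const_mul c).div_const 4)).congr_deriv (by norm_num; ring)

lemma deriv_deriv_Gq (c : ℝ) : deriv (deriv (Gq c)) = fun y => 1 + 3 * c * y ^ 2 := by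
  rw [deriv_Gq]
  exact funext fun y => HasDerivAt.deriv <|
    ((hasDerivAt_id y).add ((hasDerivAt_pow 3 y).const_mul c)).congr_deriv (by norm_num; ring)

lemma Mq_eq (a b c x y : ℝ) :
    Mq a b c x y = x ^ 4 * y ^ 4 / 24 * (Apoly a b x * Ppoly c y - Bpoly a b x * Qpoly c y) := by
  rw [Mq, Mfun, deriv_deriv_deriv_Fq, deriv_deriv_Fq, deriv_Fq, deriv_deriv_Gq, deriv_Gq]
  simp only [Fq, Gq, Apoly, Bpoly, Ppoly, Qpoly]
  ring

lemma Ppoly_nonneg {c : ℝ} (hc : 0 ≤ c) (y : ℝ) : 0 ≤ Ppoly c y := by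
  unfold Ppoly; positivity

lemma Qpoly_nonneg {c : ℝ} (hc : 0 ≤ c) (y : ℝ) : 0 ≤ Qpoly c y := by
  unfold Qpoly; positivity

lemma two_mul_Qpoly_le {c : ℝ} (hc : 0 ≤ c) (y : ℝ) : 2 * Qpoly c y ≤ 3 * c * Ppoly c y := by
  have hu : 0 ≤ c * y ^ 2 := by positivity
  have hP : 2 * (3 + c * y ^ 2) ≤ 3 * Ppoly c y := by
    unfold Ppoly; nlinarith [pow_nonneg hu 2, pow_nonneg hu 3]
  unfold Qpoly
  nlinarith [mul_le_mul_of_nonneg_left hP hc]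

section BZero

variable {a x : ℝ}

lemma Apoly_nonneg (hs : -1 ≤ a * x) : 0 ≤ Apoly a 0 x := by
  have hA : Apoly a 0 x = a ^ 2 * (10 + 4 * (a * x)) := by unfold Apoly; ring
  rw [hA]
  exact mul_nonneg (sq_nonneg a) (by linarith)

lemma three_mul_Apoly_sub_sq_mul_Bpoly :
    3 * Apoly a 0 x - a ^ 2 * Bpoly a 0 x = 2 * a ^ 2 * (1 - 2 * (a * x)) *
      (2 * (a * x + 1) ^ 3 + 3 * (a * x + 1) ^ 2 + 4 * (a * x + 1) + 3) := by
  unfold Apoly Bpoly; ring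

lemma sq_mul_Bpoly_le_three_mul_Apoly (hs : -1 ≤ a * x) (hs' : a * x ≤ 1 / 2) :
    a ^ 2 * Bpoly a 0 x ≤ 3 * Apoly a 0 x := by
  have ht : 0 ≤ a * x + 1 := by linarith
  rw [← sub_nonneg, three_mul_Apoly_sub_sq_mul_Bpoly]
  exact mul_nonneg (mul_nonneg (by positivity) (by linarith)) (by positivity)

lemma Bpoly_mul_Qpoly_le {c : ℝ} (hs : -1 ≤ a * x) (hs' : a * x ≤ 1 / 2) (hc0 : 0 ≤ c)
    (hc1 : c ≤ 2 * a ^ 2 / 9) (y : ℝ) :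
    Bpoly a 0 x * Qpoly c y ≤ Apoly a 0 x * Ppoly c y := by
  have hA := Apoly_nonneg hs
  have hP := Ppoly_nonneg hc0 y
  rcases le_or_gt (Bpoly a 0 x) 0 with hB | hB
  · exact (mul_nonpos_of_nonpos_of_nonneg hB (Qpoly_nonneg hc0 y)).trans (mul_nonneg hA hP)
  · have hBP : 0 ≤ Bpoly a 0 x * Ppoly c y := mul_nonneg hB.le hP
    calc Bpoly a 0 x * Qpoly c y
        ≤ 3 / 2 * c * (Bpoly a 0 x * Ppoly c y) := by
          nlinarith [mul_le_mul_of_nonneg_left (two_mul_Qpoly_le hc0 y) hB.le]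
      _ ≤ 1 / 3 * (a ^ 2 * Bpoly a 0 x) * Ppoly c y := by
          nlinarith [mul_le_mul_of_nonneg_right hc1 hBP]
      _ ≤ Apoly a 0 x * Ppoly c y := by
          nlinarith [mul_le_mul_of_nonneg_right (sq_mul_Bpoly_le_three_mul_Apoly hs hs') hP]

end BZero

theorem stmt6 (a c : ℝ) (ha : a ≠ 0) (hc0 : 0 ≤ c) (hc1 : c ≤ 2 * a ^ 2 / 9) :
    ∀ x ∈ Set.uIcc (-1 / a) (1 / (2 * a)), ∀ y : ℝ,
      0 ≤ Apoly a 0 x * Ppoly c y - Bpoly a 0 x * Qpoly c y ∧ 0 ≤ Mq a 0 c x y := by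
  intro x hx y
  rw [show 1 / (2 * a) = 1 / 2 / a from (div_div 1 2 a).symm] at hx
  obtain ⟨hs, hs'⟩ := mul_mem_Icc_of_mem_uIcc_div ha (by norm_num) hx
  have hD : 0 ≤ Apoly a 0 x * Ppoly c y - Bpoly a 0 x * Qpoly c y :=
    sub_nonneg.2 (Bpoly_mul_Qpoly_le hs hs' hc0 hc1 y)
  refine ⟨hD, ?_⟩
  rw [Mq_eq]
  positivity
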